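/- Fix δ ∈ ℤ and let λ be a partition with a removable box e_i such that s_δ(λ) = s_δ(λ − e_i). Then there is no row index i′ such that λ − e_i − e_{i′} is a partition and the two-box skew λ/(λ − e_i − e_{i′}) is a minimal δ-balanced skew. -/
import Mathlib


/-! ### Partitions and Young diagrams (rows/columns indexed from 1) -/

/-- An integer partition, encoded as its sequence of row lengths, with
`f 0 = 0` (rows are indexed from `1`), weakly decreasing on positive indices,
and eventually zero. -/
def IsPartition (f : ℕ → ℕ) : Prop :=
  f 0 = 0 ∧ (∀ i, 1 ≤ i → f (i + 1) ≤ f i) ∧ ∃ N, ∀ i, N ≤ i → f i = 0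

/-- The boxes of the Young diagram of `f`, as pairs (row, column) of integers,
both indexed from 1. -/
def cells (f : ℕ → ℕ) : Set (ℤ × ℤ) :=
  {p | 1 ≤ p.1 ∧ 1 ≤ p.2 ∧ p.2 ≤ (f p.1.toNat : ℤ)}

/-- The skew λ/μ of two partitions. -/
def skewOf (lam mu : ℕ → ℕ) : Set (ℤ × ℤ) := cells lam \ cells mu

/-- The δ-charge of a box `p = (i,j)`: `δ - 1 - 2 (j - i)`. -/
def chg (δ : ℤ) (p : ℤ × ℤ) : ℤ := δ - 1 - 2 * (p.2 - p.1)

/-- The π-rotation of the plane about the point `(a/2, b/2)`, as a map on boxes: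
the box `(i,j)` (the unit square `[i-1,i] × [j-1,j]`) is sent to the box
`(a + 1 - i, b + 1 - j)`. -/
def boxRot (a b : ℤ) (p : ℤ × ℤ) : ℤ × ℤ := (a + 1 - p.1, b + 1 - p.2)

/-- Two boxes are adjacent when they share an edge. -/
def adjacentCell (p q : ℤ × ℤ) : Prop := |p.1 - q.1| + |p.2 - q.2| = 1

/-- A rim: a (nonempty, finite) set of boxes which forms a path under
edge-adjacency (possibly a single box). -/
def IsRim (S : Set (ℤ × ℤ)) : Prop :=
  ∃ (n : ℕ) (s : Fin (n + 1) → ℤ × ℤ),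
    Function.Injective s ∧ Set.range s = S ∧
      ∀ k l : Fin (n + 1), adjacentCell (s k) (s l) ↔ ((k : ℕ) + 1 = l ∨ (l : ℕ) + 1 = k)

/-- `MiBSWitness δ lam mu a b` : the π-rotation about the point `(a/2, b/2)`
(which lies on the δ-charge-0 diagonal) exhibits the skew λ/μ as a union of two
rims interchanged by this rotation, with no row of the skew fixed by the
rotation (the rotation sends row `i` to row `a + 1 - i`). -/
def MiBSWitness (δ : ℤ) (lam mu : ℕ → ℕ) (a b : ℤ) : Prop :=
  b - a = δ - 1 ∧
  (∃ R1 R2 : Set (ℤ × ℤ),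
      IsRim R1 ∧ IsRim R2 ∧ skewOf lam mu = R1 ∪ R2 ∧ boxRot a b '' R1 = R2) ∧
  ∀ p ∈ skewOf lam mu, 2 * p.1 ≠ a + 1

/-- λ/μ is a minimal δ-balanced skew. -/
def IsMiBS (δ : ℤ) (lam mu : ℕ → ℕ) : Prop :=
  IsPartition lam ∧ IsPartition mu ∧ cells mu ⊆ cells lam ∧
    ∃ a b : ℤ, MiBSWitness δ lam mu a b

/-- `μ ←^δ λ` : λ/μ is a minimal δ-balanced skew. -/
def MiBSRel (δ : ℤ) (mu lam : ℕ → ℕ) : Prop := IsMiBS δ lam mu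

/-- `μ <^δ λ` : the transitive closure of `←^δ`. -/
def ltDelta (δ : ℤ) : (ℕ → ℕ) → (ℕ → ℕ) → Prop := Relation.TransGen (MiBSRel δ)

/-- `μ ∼^δ λ` : the reflexive-symmetric-transitive closure of `←^δ`
(the block relation). -/
def simDelta (δ : ℤ) : (ℕ → ℕ) → (ℕ → ℕ) → Prop := Relation.EqvGen (MiBSRel δ)

/-- Remove the last box of row `i`. -/
def removeBox (f : ℕ → ℕ) (i : ℕ) : ℕ → ℕ := fun k => if k = i then f i - 1 else f k

/-- Add a box at the end of row `i`. -/
def addBox (f : ℕ → ℕ) (i : ℕ) : ℕ → ℕ := fun k => if k = i then f i + 1 else f k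

/-- The box `e_i` at the end of row `i` of `f` is removable. -/
def Removable (f : ℕ → ℕ) (i : ℕ) : Prop :=
  1 ≤ i ∧ 1 ≤ f i ∧ IsPartition (removeBox f i)

/-- The cell `p` is a removable box of the partition `f`. -/
def RemovableCell (f : ℕ → ℕ) (p : ℤ × ℤ) : Prop :=
  ∃ i : ℕ, Removable f i ∧ p = ((i : ℤ), (f i : ℤ))

/-- `(ρ_δ)_i = -δ/2 - (i - 1)`. -/
noncomputable def rho (δ : ℤ) (i : ℕ) : ℝ := -(δ : ℝ) / 2 - ((i : ℝ) - 1)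

/-- `e_δ(λ) = λ + ρ_δ ∈ ℝ^ℕ`. -/
noncomputable def eDel (δ : ℤ) (f : ℕ → ℕ) : ℕ → ℝ := fun i => (f i : ℝ) + rho δ i

/-- The singularity `s_δ(λ)`: the number of pairs `i < j` of (positive) positions
with `e_δ(λ)_i = -e_δ(λ)_j`. -/
noncomputable def sing (δ : ℤ) (f : ℕ → ℕ) : ℕ :=
  Set.ncard {q : ℕ × ℕ | 1 ≤ q.1 ∧ q.1 < q.2 ∧ eDel δ f q.1 = -(eDel δ f q.2)}

/-- The boxes of `S` lying in row `i`. -/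
def rowCells (S : Set (ℤ × ℤ)) (i : ℤ) : Set (ℤ × ℤ) := {p | p ∈ S ∧ p.1 = i}

/-- Rows `i` and `j` of the skew `S` are matched by the π-rotation about
`(a/2, b/2)`: the rotation maps the skew boxes in row `i` onto those in row `j`. -/
def MatchedRows (a b : ℤ) (S : Set (ℤ × ℤ)) (i j : ℤ) : Prop :=
  (rowCells S i).Nonempty ∧ boxRot a b '' rowCells S i = rowCells S j

/-- `e_i` is a rim-end removable box of the skew λ/μ: a removable box of λ
contained in the skew, of maximal absolute δ-charge among such boxes. -/
def RimEndBox (δ : ℤ) (lam mu : ℕ → ℕ) (i : ℕ) : Prop :=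
  Removable lam i ∧ ((i : ℤ), (lam i : ℤ)) ∈ skewOf lam mu ∧
    ∀ i' : ℕ, Removable lam i' → ((i' : ℤ), (lam i' : ℤ)) ∈ skewOf lam mu →
      |chg δ ((i' : ℤ), (lam i' : ℤ))| ≤ |chg δ ((i : ℤ), (lam i : ℤ))|

/-- A set of boxes is boxy if every box lies in some 2×2 block of boxes
entirely contained in the set. -/
def Boxy (S : Set (ℤ × ℤ)) : Prop :=
  ∀ p ∈ S, ∃ q : ℤ × ℤ,
    p ∈ ({q, (q.1 + 1, q.2), (q.1, q.2 + 1), (q.1 + 1, q.2 + 1)} : Set (ℤ × ℤ)) ∧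
    ({q, (q.1 + 1, q.2), (q.1, q.2 + 1), (q.1 + 1, q.2 + 1)} : Set (ℤ × ℤ)) ⊆ S

/-! ### Sequences, the reflection group 𝒟, and orbits -/

/-- A strongly decreasing sequence (on positive positions): `v_i - v_{i+1} ≥ 1`. -/
def StronglyDecr (v : ℕ → ℝ) : Prop := ∀ i, 1 ≤ i → v (i + 1) ≤ v i - 1

/-- Entrywise order on sequences (positions indexed from 1). -/
def leSeq (v w : ℕ → ℝ) : Prop := ∀ i, 1 ≤ i → v i ≤ w i

/-- `w'` covers `w` in the entrywise order restricted to `S`. -/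
def SeqCovers (S : Set (ℕ → ℝ)) (w w' : ℕ → ℝ) : Prop :=
  leSeq w w' ∧ w ≠ w' ∧ ¬∃ u ∈ S, u ≠ w ∧ u ≠ w' ∧ leSeq w u ∧ leSeq u w'

/-- The map `(ij)` swapping the `i`-th and `j`-th entries of a sequence. -/
def swapFun (i j : ℕ) (v : ℕ → ℝ) : ℕ → ℝ :=
  fun k => if k = i then v j else if k = j then v i else v k

/-- The map `(ij)_-` replacing the pair of entries `(v_i, v_j)` by `(-v_j, -v_i)`. -/
def negSwapFun (i j : ℕ) (v : ℕ → ℝ) : ℕ → ℝ :=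
  fun k => if k = i then -v j else if k = j then -v i else v k

lemma swapFun_involutive (i j : ℕ) : Function.Involutive (swapFun i j) := by
  intro v; funext k; unfold swapFun
  split_ifs <;> simp_all

lemma negSwapFun_involutive (i j : ℕ) : Function.Involutive (negSwapFun i j) := by
  intro v; funext k; unfold negSwapFun
  split_ifs <;> simp_all

/-- `(ij)` as a bijection of `ℝ^ℕ`. -/
def swapPerm (i j : ℕ) : Equiv.Perm (ℕ → ℝ) :=
  Function.Involutive.toPerm _ (swapFun_involutive i j)

/-- `(ij)_-` as a bijection of `ℝ^ℕ`. -/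
def negSwapPerm (i j : ℕ) : Equiv.Perm (ℕ → ℝ) :=
  Function.Involutive.toPerm _ (negSwapFun_involutive i j)

/-- The generators `(ij)`, `(ij)_-` for `1 ≤ i < j`. -/
def Dgens : Set (Equiv.Perm (ℕ → ℝ)) :=
  {g | ∃ i j : ℕ, 1 ≤ i ∧ i < j ∧ (g = swapPerm i j ∨ g = negSwapPerm i j)}

/-- The group 𝒟 of bijections of `ℝ^ℕ` generated by all `(ij)` and `(ij)_-`. -/
def Dgroup : Subgroup (Equiv.Perm (ℕ → ℝ)) := Subgroup.closure Dgens

/-- `V(v) = 𝒟v ∩ A^+`. -/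
def Vset (v : ℕ → ℝ) : Set (ℕ → ℝ) :=
  {w | (∃ g ∈ Dgroup, g v = w) ∧ StronglyDecr w}

/-- Position `i ≥ 1` of `v` belongs to no doubleton. -/
def keptPos (v : ℕ → ℝ) (i : ℕ) : Prop :=
  1 ≤ i ∧ ∀ j, 1 ≤ j → j ≠ i → v j ≠ -v i

/-- `Reg v`: delete all entries of `v` belonging to doubletons, and re-index
the remaining entries in their original order (positions from 1). -/
noncomputable def Reg (v : ℕ → ℝ) : ℕ → ℝ :=
  fun n => if n = 0 then v 0 else v (Nat.nth (keptPos v) (n - 1))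

/-- Insert the value `a` into the sequence `t` after position `i`. -/
def insertAt (t : ℕ → ℝ) (i : ℕ) (a : ℝ) : ℕ → ℝ :=
  fun k => if k ≤ i then t k else if k = i + 1 then a else t (k - 1)

/-- The set of positive naturals occurring as entries of `w`. -/
def Pmap (w : ℕ → ℝ) : Set ℕ := {n | 1 ≤ n ∧ ∃ i, 1 ≤ i ∧ w i = (n : ℝ)}

/-- The sequence `(v_-)_i = -i`. -/
noncomputable def vminus : ℕ → ℝ := fun i => -(i : ℝ)

open Classical in
/-- The product `w = ∏_{{i,j} ∈ R} (ij)_-` over the matched row pairs of a MiBS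
with π-rotation about `(a/2, ·)` (row `i` is matched with row `a + 1 - i`),
acting on a sequence `v`. -/
noncomputable def wAct (a : ℤ) (S : Set (ℤ × ℤ)) (v : ℕ → ℝ) : ℕ → ℝ :=
  fun k => if 1 ≤ k ∧ (∃ p ∈ S, p.1 = (k : ℤ)) then -v (a + 1 - (k : ℤ)).toNat else v k

/-! ### TL-diagrams -/

/-- Reading `0` (not in `a`) as `+1` and `1` (in `a`) as `-1`:
the depth of the interval `[p, r]`. -/
def tlDepth (a : Finset ℕ) (p r : ℕ) : ℤ :=
  (((Finset.Icc p r).filter (fun i => i ∉ a)).card : ℤ) -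
    (((Finset.Icc p r).filter (fun i => i ∈ a)).card : ℤ)

/-- `{p, q}` is a pair formed in the first (bracket-matching) phase of the
construction of `𝒯(a)`. -/
def MatchedPair (a : Finset ℕ) (p q : ℕ) : Prop :=
  1 ≤ p ∧ p < q ∧ p ∉ a ∧ q ∈ a ∧ tlDepth a p q = 0 ∧
    ∀ r, p ≤ r → r < q → 0 < tlDepth a p r

/-- The `1`-positions left unpaired by the first phase. -/
def leftover (a : Finset ℕ) : Set ℕ := {q | q ∈ a ∧ ¬∃ p, MatchedPair a p q}

/-- All the pair parts of `𝒯(a)`: the matched pairs together with the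
consecutive pairing (from the left) of the leftover `1`-positions. -/
noncomputable def TLpairs (a : Finset ℕ) : Set (Set ℕ) :=
  {P | (∃ p q, MatchedPair a p q ∧ P = {p, q}) ∨
       (∃ k : ℕ, 2 * k + 1 < (leftover a).ncard ∧
          P = {Nat.nth (· ∈ leftover a) (2 * k), Nat.nth (· ∈ leftover a) (2 * k + 1)})}

/-- The parts of the partition `𝒯(a)` of `{1,2,3,…}`: the pair parts, and a
singleton for every other positive position. -/
noncomputable def TLparts (a : Finset ℕ) : Set (Set ℕ) :=
  TLpairs a ∪ {P | ∃ x : ℕ, 1 ≤ x ∧ (∀ Q ∈ TLpairs a, x ∉ Q) ∧ P = {x}}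

/-! ### Brauer diagrams -/

/-- `(m,l)`-pair-partitions, encoded as fixed-point-free involutions of
`{1,…,m} ⊔ {1',…,l'}`. -/
def BrDiag (m l : ℕ) : Set ((Fin m ⊕ Fin l) → (Fin m ⊕ Fin l)) :=
  {f | Function.Involutive f ∧ ∀ x, f x ≠ x}

/-- `Br^l(m,l)`: every primed element lies in a propagating block. -/
def BrProp (m l : ℕ) : Set ((Fin m ⊕ Fin l) → (Fin m ⊕ Fin l)) :=
  {f | f ∈ BrDiag m l ∧ ∀ i : Fin l, ∃ j : Fin m, f (Sum.inr i) = Sum.inl j}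

/-- `Br^{l̲}(m,l)`: moreover the propagating blocks are non-crossing. -/
def BrNC (m l : ℕ) : Set ((Fin m ⊕ Fin l) → (Fin m ⊕ Fin l)) :=
  {f | f ∈ BrProp m l ∧ ∀ (i h : Fin l) (j k : Fin m),
      f (Sum.inr i) = Sum.inl j → f (Sum.inr h) = Sum.inl k → i < h → j < k}

/-- The pair-partition with the same non-propagating blocks as `w`, and with
propagating block `{j, σ(i)'}` for each propagating block `{j, i'}` of `w`. -/
def brMap (m l : ℕ) (w : (Fin m ⊕ Fin l) → (Fin m ⊕ Fin l)) (σ : Equiv.Perm (Fin l)) :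
    (Fin m ⊕ Fin l) → (Fin m ⊕ Fin l) :=
  fun x => Sum.map id σ (w (Sum.map id σ.symm x))

/-! ### Auxiliary lemmas for `stmt9` -/

lemma eDel_iff' (δ : ℤ) (f : ℕ → ℕ) (k j : ℕ) :
    eDel δ f k = -(eDel δ f j) ↔ (f k : ℤ) + (f j : ℤ) + 2 - (k : ℤ) - (j : ℤ) = δ := by
  unfold eDel rho
  constructor
  · intro h
    have h2 : (((f k : ℤ) + (f j : ℤ) + 2 - (k : ℤ) - (j : ℤ) - δ : ℤ) : ℝ) = 0 := by
      push_cast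
      linarith
    have h3 : ((f k : ℤ) + (f j : ℤ) + 2 - (k : ℤ) - (j : ℤ) - δ : ℤ) = 0 := by
      exact_mod_cast h2
    omega
  · intro h
    have h2 : (((f k : ℤ) + (f j : ℤ) + 2 - (k : ℤ) - (j : ℤ) : ℤ) : ℝ) = ((δ : ℤ) : ℝ) := by
      exact_mod_cast congrArg (fun z : ℤ => (z : ℝ)) h
    push_cast at h2
    linarith

lemma part_anti {f : ℕ → ℕ} (hf : IsPartition f) :
    ∀ m n : ℕ, 1 ≤ m → m ≤ n → f n ≤ f m := by
  intro m n hm hmn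
  induction n with
  | zero => omega
  | succ n ih =>
    rcases Nat.lt_or_ge m (n + 1) with h | h
    · have h1 : f (n + 1) ≤ f n := hf.2.1 n (by omega)
      have h2 : f n ≤ f m := ih (by omega)
      omega
    · have h2 : m = n + 1 := by omega
      rw [h2]

lemma mem_skewOf_iff (lam mu : ℕ → ℕ) (r : ℤ × ℤ) :
    r ∈ skewOf lam mu ↔
      1 ≤ r.1 ∧ 1 ≤ r.2 ∧ r.2 ≤ (lam r.1.toNat : ℤ) ∧ (mu r.1.toNat : ℤ) < r.2 := by
  unfold skewOf cells
  simp only [Set.mem_diff, Set.mem_setOf_eq]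
  constructor
  · rintro ⟨⟨h1, h2, h3⟩, h4⟩
    refine ⟨h1, h2, h3, ?_⟩
    by_contra h
    push_neg at h
    exact h4 ⟨h1, h2, by omega⟩
  · rintro ⟨h1, h2, h3, h4⟩
    refine ⟨⟨h1, h2, h3⟩, ?_⟩
    rintro ⟨-, -, h5⟩
    omega

/-- If λ has a removable box `e_i` with
`s_δ(λ) = s_δ(λ - e_i)`, then there is no row `i'` such that
`λ - e_i - e_{i'}` is a partition with `λ/(λ - e_i - e_{i'})` a minimal
δ-balanced skew. -/
theorem stmt9 (δ : ℤ) (lam : ℕ → ℕ) (hl : IsPartition lam) (i : ℕ)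
    (hrem : Removable lam i) (hs : sing δ lam = sing δ (removeBox lam i)) :
    ¬∃ i' : ℕ, 1 ≤ i' ∧ 1 ≤ removeBox lam i i' ∧
        IsPartition (removeBox (removeBox lam i) i') ∧
        IsMiBS δ lam (removeBox (removeBox lam i) i') := by
  rintro ⟨i', hi'1, hfi', hmupart, hmibs⟩
  obtain ⟨hi1, hlami, hfpart⟩ := hrem
  set f : ℕ → ℕ := removeBox lam i with hf
  set mu : ℕ → ℕ := removeBox f i' with hmu
  have hfval : ∀ k, k ≠ i → f k = lam k := by
    intro k hk; simp [hf, removeBox, hk]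
  have hfi : f i = lam i - 1 := by simp [hf, removeBox]
  have hfle : ∀ k, f k ≤ lam k := by
    intro k
    by_cases hk : k = i
    · subst hk; rw [hfi]; omega
    · rw [hfval k hk]
  have hmuval : ∀ k, k ≠ i → k ≠ i' → mu k = lam k := by
    intro k hk hk'
    simp [hmu, removeBox, hk', hfval k hk]
  obtain ⟨-, -, hsub, a, b, hba, ⟨R1, R2, hR1, hR2, hsk, hrot⟩, hnofix⟩ := hmibs
  obtain ⟨n, s, hsinj, hsrange, -⟩ := hR1
  have hr1mem : s 0 ∈ R1 := by rw [← hsrange]; exact ⟨0, rfl⟩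
  have hR1sub : R1 ⊆ skewOf lam mu := by rw [hsk]; exact Set.subset_union_left
  have hR2sub : R2 ⊆ skewOf lam mu := by rw [hsk]; exact Set.subset_union_right
  have hr0 : s 0 ∈ skewOf lam mu := hR1sub hr1mem
  have hbr : boxRot a b (s 0) ∈ skewOf lam mu :=
    hR2sub (hrot ▸ Set.mem_image_of_mem _ hr1mem)
  by_cases hii : i' = i
  · -- the two boxes are in the same row `i`; the rotation would fix that row
    subst hii
    have hrow : ∀ r ∈ skewOf lam mu, r.1 = (i' : ℤ) := by
      intro r hr
      rw [mem_skewOf_iff] at hr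
      obtain ⟨h1, h2, h3, h4⟩ := hr
      by_cases hk : r.1.toNat = i'
      · omega
      · rw [hmuval r.1.toNat hk hk] at h4
        omega
    have h1 := hrow _ hr0
    have h2 := hrow _ hbr
    have h3 := hnofix _ hr0
    simp only [boxRot] at h2
    omega
  · -- the two boxes are in distinct rows `i`, `i'`
    have hlami' : 1 ≤ lam i' := by rw [← hfval i' hii]; exact hfi'
    have hmui : mu i = lam i - 1 := by
      simp [hmu, removeBox, Ne.symm hii, hfi]
    have hmui' : mu i' = lam i' - 1 := by
      simp [hmu, removeBox, hfval i' hii]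
    -- characterize the skew
    have hchar : ∀ r ∈ skewOf lam mu,
        r = ((i : ℤ), (lam i : ℤ)) ∨ r = ((i' : ℤ), (lam i' : ℤ)) := by
      intro r hr
      rw [mem_skewOf_iff] at hr
      obtain ⟨h1, h2, h3, h4⟩ := hr
      by_cases hk : r.1.toNat = i
      · left
        have hr1 : r.1 = (i : ℤ) := by omega
        have hr2 : r.2 = (lam i : ℤ) := by rw [hk] at h3 h4; rw [hmui] at h4; omega
        exact Prod.ext hr1 hr2
      · by_cases hk' : r.1.toNat = i'
        · right
          have hr1 : r.1 = (i' : ℤ) := by omega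
          have hr2 : r.2 = (lam i' : ℤ) := by rw [hk'] at h3 h4; rw [hmui'] at h4; omega
          exact Prod.ext hr1 hr2
        · rw [hmuval r.1.toNat hk hk'] at h4
          omega
    -- the rotation swaps the two boxes
    have hkey : (i : ℤ) + (i' : ℤ) = a + 1 ∧ (lam i : ℤ) + (lam i' : ℤ) = b + 1 := by
      have hc2 := hchar _ hbr
      rcases hchar _ hr0 with h | h
      · have hnf : 2 * (i : ℤ) ≠ a + 1 := by
          have h' := hnofix _ hr0; rw [h] at h'; exact h'
        rw [h] at hc2
        simp only [boxRot, Prod.mk.injEq] at hc2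
        rcases hc2 with ⟨e1, e2⟩ | ⟨e1, e2⟩
        · omega
        · exact ⟨by omega, by omega⟩
      · have hnf : 2 * (i' : ℤ) ≠ a + 1 := by
          have h' := hnofix _ hr0; rw [h] at h'; exact h'
        rw [h] at hc2
        simp only [boxRot, Prod.mk.injEq] at hc2
        rcases hc2 with ⟨e1, e2⟩ | ⟨e1, e2⟩
        · exact ⟨by omega, by omega⟩
        · omega
    have hgi' : (lam i' : ℤ) = δ - 1 + (i : ℤ) - (lam i : ℤ) + (i' : ℤ) := by omega
    -- no singular pair of λ involves row i
    have hkeyno : ∀ m : ℕ, 1 ≤ m → m ≠ i →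
        (lam i : ℤ) + (lam m : ℤ) + 2 - (i : ℤ) - (m : ℤ) ≠ δ := by
      intro m hm1 hmi hEq
      rcases Nat.lt_or_ge i' m with hlt | hle
      · have ha1 : lam m ≤ lam (i' + 1) := part_anti hl (i' + 1) m (by omega) (by omega)
        have ha2 : lam (i' + 1) ≤ lam i' := part_anti hl i' (i' + 1) hi'1 (by omega)
        have hm' : m = i' + 1 ∧ lam (i' + 1) = lam i' := by omega
        have hp2 := hmupart.2.1 i' hi'1
        rw [hmuval (i' + 1) (by omega) (by omega), hmui'] at hp2
        omega
      · have ha1 : lam i' ≤ lam m := part_anti hl m i' hm1 hle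
        omega
    -- the singular pairs
    unfold sing at hs
    set A := {q : ℕ × ℕ | 1 ≤ q.1 ∧ q.1 < q.2 ∧ eDel δ lam q.1 = -(eDel δ lam q.2)} with hA
    set B := {q : ℕ × ℕ | 1 ≤ q.1 ∧ q.1 < q.2 ∧ eDel δ f q.1 = -(eDel δ f q.2)} with hB
    have hfiZ : (f i : ℤ) = (lam i : ℤ) - 1 := by rw [hfi]; omega
    have hfi'Z : (f i' : ℤ) = (lam i' : ℤ) := by rw [hfval i' hii]
    have hAB : A ⊆ B := by
      intro pr hpr
      rw [hA] at hpr
      obtain ⟨h1, h2, h3⟩ := hpr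
      have h3' := (eDel_iff' δ lam pr.1 pr.2).mp h3
      have hk : pr.1 ≠ i := by
        intro e
        rw [e] at h3' h2
        exact hkeyno pr.2 (by omega) (by omega) h3'
      have hj : pr.2 ≠ i := by
        intro e
        rw [e] at h3' h2
        exact hkeyno pr.1 h1 (by omega) (by omega)
      rw [hB]
      exact ⟨h1, h2, (eDel_iff' δ f pr.1 pr.2).mpr
        (by rw [hfval _ hk, hfval _ hj]; exact h3')⟩
    obtain ⟨e0, he0B, he0nA⟩ : ∃ e0, e0 ∈ B ∧ e0 ∉ A := by
      have hBmem : ∀ k j : ℕ, 1 ≤ k → k < j →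
          (f k : ℤ) + (f j : ℤ) + 2 - (k : ℤ) - (j : ℤ) = δ → (k, j) ∈ B := by
        intro k j h1 h2 h3
        rw [hB]
        exact ⟨h1, h2, (eDel_iff' δ f k j).mpr h3⟩
      have hAnot : ∀ k j : ℕ,
          (lam k : ℤ) + (lam j : ℤ) + 2 - (k : ℤ) - (j : ℤ) ≠ δ → (k, j) ∉ A := by
        intro k j hne hmem
        rw [hA] at hmem
        exact hne ((eDel_iff' δ lam k j).mp hmem.2.2)
      rcases Nat.lt_or_ge i i' with hlt | hlt
      · exact ⟨(i, i'), hBmem i i' hi1 hlt (by omega), hAnot i i' (by omega)⟩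
      · have hlt' : i' < i := by omega
        exact ⟨(i', i), hBmem i' i hi'1 hlt' (by omega), hAnot i' i (by omega)⟩
    set N : ℕ := (2 * (lam 1 : ℤ) + 2 - δ).toNat with hN
    have hBsub : B ⊆ Set.Iio N ×ˢ Set.Iio N := by
      intro pr hpr
      rw [hB] at hpr
      obtain ⟨h1, h2, h3⟩ := hpr
      have h3' := (eDel_iff' δ f pr.1 pr.2).mp h3
      have hk1 : f pr.1 ≤ lam 1 := le_trans (hfle pr.1) (part_anti hl 1 pr.1 (le_refl 1) h1)
      have hj1 : f pr.2 ≤ lam 1 := le_trans (hfle pr.2) (part_anti hl 1 pr.2 (le_refl 1) (by omega))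
      constructor
      · show pr.1 ∈ Set.Iio N
        simp only [Set.mem_Iio]
        omega
      · show pr.2 ∈ Set.Iio N
        simp only [Set.mem_Iio]
        omega
    have hBfin : B.Finite :=
      Set.Finite.subset ((Set.finite_Iio N).prod (Set.finite_Iio N)) hBsub
    have hss : A ⊂ B := (Set.ssubset_iff_of_subset hAB).mpr ⟨e0, he0B, he0nA⟩
    have hlt := Set.ncard_lt_ncard hss hBfin
    omega
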